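/- Let (X, ℬ) be a measurable space, κ a sub-Markov transition kernel on X, m a conservative reversible probability measure for κ, and f : X → ℝ a bounded measurable function. Then the following are equivalent: (a) for every bounded measurable g : X → ℝ, T(g·f) = (T g)·f m-almost everywhere; (b) T f = f m-almost everywhere; (c) ∫_X (f − T f)·f dm = 0; (d) f(x₀) = f(x₁) for σ_m-almost every (x₀, x₁) ∈ X × X. -/

import Mathlib

/-!
Expanding the square, `∫ (f x₀ - f x₁)² dσ_m = ∫ f² · T 1 dm - 2 ∫ f · T f dm + ∫ T (f²) dm`.
Conservativity turns the first term into `∫ f² dm`, and reversibility tested against `1` makes `m`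
invariant, which turns the last term into `∫ f² dm` as well; so the left side is
`2 ∫ (f - T f) f dm`, giving (c) ⇒ (d). Under (d), `f = f x` holds `κ x`-a.e. for `m`-a.e. `x`,
which is (a); and (a) with `g = 1` is (b) because conservativity forces `T 1 = 1` `m`-a.e.
-/

open MeasureTheory ProbabilityTheory

variable {X : Type*} [MeasurableSpace X]

/-- A function is bounded measurable. -/
def BddMeasurable {X : Type*} [MeasurableSpace X] (f : X → ℝ) : Prop :=
  Measurable f ∧ ∃ C : ℝ, ∀ x, |f x| ≤ C

/-- The transition operator `T f (x) = ∫ f(y) κ(x, dy)`. -/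
noncomputable def Tker {X : Type*} [MeasurableSpace X] (κ : Kernel X X) (f : X → ℝ) :
    X → ℝ :=
  fun x => ∫ y, f y ∂(κ x)

/-- `m` is an invariant measure: `∫ T f dm = ∫ f dm` for all bounded measurable `f`. -/
def IsInvariantMeas {X : Type*} [MeasurableSpace X] (κ : Kernel X X) (m : Measure X) : Prop :=
  ∀ f : X → ℝ, BddMeasurable f → ∫ x, Tker κ f x ∂m = ∫ x, f x ∂m

/-- `m` is a reversible measure: `∫ (T f) g dm = ∫ f (T g) dm`
for all bounded measurable `f, g`. -/
def IsReversibleMeas {X : Type*} [MeasurableSpace X] (κ : Kernel X X) (m : Measure X) : Prop :=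
  ∀ f g : X → ℝ, BddMeasurable f → BddMeasurable g →
    ∫ x, Tker κ f x * g x ∂m = ∫ x, f x * Tker κ g x ∂m

/-- `m` is a conservative measure: `∫ (T 1) g dm = ∫ g dm`
for all bounded measurable `g`, where `T 1 (x) = κ(x, X)`. -/
def IsConservativeMeas {X : Type*} [MeasurableSpace X] (κ : Kernel X X) (m : Measure X) :
    Prop :=
  ∀ g : X → ℝ, BddMeasurable g → ∫ x, (κ x Set.univ).toReal * g x ∂m = ∫ x, g x ∂m

/-- `m` is an extreme element of a set `C` of measures: `m ∈ C` and whenever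
`m = (1 - t) • m₀ + t • m₁` with `t ∈ (0,1)` and `m₀, m₁ ∈ C`, one has `m₀ = m₁`. -/
def IsExtremeElem {X : Type*} [MeasurableSpace X] (C : Set (Measure X)) (m : Measure X) :
    Prop :=
  m ∈ C ∧ ∀ t : ℝ, t ∈ Set.Ioo (0 : ℝ) 1 → ∀ m₀ m₁ : Measure X, m₀ ∈ C → m₁ ∈ C →
    m = ENNReal.ofReal (1 - t) • m₀ + ENNReal.ofReal t • m₁ → m₀ = m₁

section BddMeasurable

variable {Y : Type*} [MeasurableSpace Y]

lemma bddMeasurable_const (c : ℝ) : BddMeasurable fun _ : Y => c :=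
  ⟨measurable_const, |c|, fun _ => le_rfl⟩

lemma BddMeasurable.mul {f g : Y → ℝ} (hf : BddMeasurable f) (hg : BddMeasurable g) :
    BddMeasurable fun x => f x * g x := by
  obtain ⟨hmf, C, hC⟩ := hf
  obtain ⟨hmg, D, hD⟩ := hg
  refine ⟨hmf.mul hmg, C * D, fun x => ?_⟩
  rw [abs_mul]
  exact mul_le_mul (hC x) (hD x) (abs_nonneg _) ((abs_nonneg _).trans (hC x))

lemma BddMeasurable.sub {f g : Y → ℝ} (hf : BddMeasurable f) (hg : BddMeasurable g) :
    BddMeasurable fun x => f x - g x := by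
  obtain ⟨hmf, C, hC⟩ := hf
  obtain ⟨hmg, D, hD⟩ := hg
  exact ⟨hmf.sub hmg, C + D, fun x => (abs_sub _ _).trans (add_le_add (hC x) (hD x))⟩

lemma BddMeasurable.comp_measurable {Z : Type*} [MeasurableSpace Z] {f : Y → ℝ} {φ : Z → Y}
    (hf : BddMeasurable f) (hφ : Measurable φ) : BddMeasurable fun z => f (φ z) :=
  ⟨hf.1.comp hφ, hf.2.imp fun _ hC z => hC (φ z)⟩

lemma BddMeasurable.fst_mul_snd {g h : Y → ℝ} (hg : BddMeasurable g) (hh : BddMeasurable h) :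
    BddMeasurable fun p : Y × Y => g p.1 * h p.2 :=
  (hg.comp_measurable measurable_fst).mul (hh.comp_measurable measurable_snd)

lemma BddMeasurable.integrable {μ : Measure Y} [IsFiniteMeasure μ] {f : Y → ℝ}
    (hf : BddMeasurable f) : Integrable f μ := by
  obtain ⟨hm, C, hC⟩ := hf
  exact (integrable_const C).mono' hm.aestronglyMeasurable (.of_forall fun x => hC x)

lemma BddMeasurable.ae_eq_of_integral_sub_sq_eq_zero {μ : Measure Y} [IsFiniteMeasure μ]
    {u v : Y → ℝ} (hu : BddMeasurable u) (hv : BddMeasurable v)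
    (h : ∫ y, (u y - v y) ^ 2 ∂μ = 0) : ∀ᵐ y ∂μ, u y = v y := by
  have hd := hu.sub hv
  have hint : Integrable (fun y => (u y - v y) ^ 2) μ := by
    simpa only [sq] using (hd.mul hd).integrable
  filter_upwards [(integral_eq_zero_iff_of_nonneg (fun y => sq_nonneg (u y - v y)) hint).mp h]
    with y hy
  exact sub_eq_zero.mp (pow_eq_zero_iff two_ne_zero |>.mp hy)

end BddMeasurable

section Kernel

variable {κ : Kernel X X} {m : Measure X}

lemma measurable_Tker [IsSFiniteKernel κ] {f : X → ℝ} (hf : Measurable f) :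
    Measurable (Tker κ f) :=
  (StronglyMeasurable.integral_kernel_prod_right
    (f := fun _ y => f y) (hf.comp measurable_snd).stronglyMeasurable).measurable

lemma BddMeasurable.Tker [IsFiniteKernel κ] {f : X → ℝ} (hf : BddMeasurable f) :
    BddMeasurable (_root_.Tker κ f) := by
  obtain ⟨hm, C, hC⟩ := hf
  refine ⟨measurable_Tker hm, C * κ.bound.toReal, fun x => ?_⟩
  calc |_root_.Tker κ f x| ≤ C * (κ x Set.univ).toReal := by
        simpa [_root_.Tker, measureReal_def, mul_comm] using
          norm_integral_le_of_norm_le_const (μ := κ x)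
            (.of_forall fun y => (Real.norm_eq_abs _).trans_le (hC y))
    _ ≤ C * κ.bound.toReal :=
        mul_le_mul_of_nonneg_left
          (ENNReal.toReal_mono κ.bound_ne_top (κ.measure_le_bound x _))
          ((abs_nonneg _).trans (hC x))

lemma Tker_one (κ : Kernel X X) (x : X) : Tker κ (fun _ => 1) x = (κ x Set.univ).toReal := by
  simp [Tker, measureReal_def]

lemma bddMeasurable_kernel_univ [IsFiniteKernel κ] :
    BddMeasurable fun x => (κ x Set.univ).toReal := by
  rw [← funext (Tker_one κ)]
  exact (bddMeasurable_const 1).Tker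

lemma IsConservativeMeas.ae_kernel_univ_eq_one [IsFiniteKernel κ] [IsFiniteMeasure m]
    (hcon : IsConservativeMeas κ m) : ∀ᵐ x ∂m, (κ x Set.univ).toReal = 1 := by
  set t : X → ℝ := fun x => (κ x Set.univ).toReal
  have ht : BddMeasurable t := bddMeasurable_kernel_univ
  have hg : BddMeasurable fun x => t x - 1 := ht.sub (bddMeasurable_const 1)
  refine ht.ae_eq_of_integral_sub_sq_eq_zero (bddMeasurable_const 1) ?_
  calc ∫ x, (t x - 1) ^ 2 ∂m = ∫ x, (t x * (t x - 1) - (t x - 1)) ∂m := by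
        congr 1; ext x; ring
    _ = 0 := by rw [integral_sub (ht.mul hg).integrable hg.integrable, hcon _ hg, sub_self]

lemma IsReversibleMeas.isInvariantMeas [IsFiniteKernel κ] (hrev : IsReversibleMeas κ m)
    (hcon : IsConservativeMeas κ m) : IsInvariantMeas κ m := fun h hh =>
  calc ∫ x, Tker κ h x ∂m = ∫ x, h x * (κ x Set.univ).toReal ∂m := by
        simpa only [mul_one, Tker_one] using hrev h _ hh (bddMeasurable_const 1)
    _ = ∫ x, h x ∂m := by simp only [← hcon h hh, mul_comm]

lemma integral_compProd_mul [IsFiniteKernel κ] [IsFiniteMeasure m] {g h : X → ℝ}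
    (hg : BddMeasurable g) (hh : BddMeasurable h) :
    ∫ p, g p.1 * h p.2 ∂(m.compProd κ) = ∫ x, g x * Tker κ h x ∂m := by
  rw [Measure.integral_compProd (hg.fst_mul_snd hh).integrable]
  simp only [integral_const_mul, Tker]

lemma integral_compProd_sub_sq [IsFiniteKernel κ] [IsFiniteMeasure m]
    (hcon : IsConservativeMeas κ m) (hinv : IsInvariantMeas κ m) {f : X → ℝ}
    (hf : BddMeasurable f) :
    ∫ p, (f p.1 - f p.2) ^ 2 ∂(m.compProd κ) = 2 * ∫ x, (f x - Tker κ f x) * f x ∂m := by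
  have hff := hf.mul hf
  have h1 := bddMeasurable_const (Y := X) 1
  have hint {g h : X → ℝ} (hg : BddMeasurable g) (hh : BddMeasurable h) :
      Integrable (fun p : X × X => g p.1 * h p.2) (m.compProd κ) :=
    (hg.fst_mul_snd hh).integrable
  calc ∫ p, (f p.1 - f p.2) ^ 2 ∂(m.compProd κ)
      = ∫ p, ((f p.1 * f p.1) * 1 + 1 * (f p.2 * f p.2) - 2 * (f p.1 * f p.2)) ∂(m.compProd κ) := by
        congr 1; ext p; ring
    _ = ∫ x, f x * f x * Tker κ (fun _ => 1) x ∂m + ∫ x, 1 * Tker κ (fun y => f y * f y) x ∂m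
          - 2 * ∫ x, f x * Tker κ f x ∂m := by
        rw [integral_sub, integral_add (hint hff h1) (hint h1 hff), integral_const_mul (2 : ℝ),
          integral_compProd_mul hff h1, integral_compProd_mul h1 hff, integral_compProd_mul hf hf]
        exacts [(hint hff h1).add (hint h1 hff), (hint hf hf).const_mul 2]
    _ = 2 * ∫ x, (f x - Tker κ f x) * f x ∂m := by
        simp only [Tker_one, one_mul, mul_comm _ (κ _ Set.univ).toReal, hcon _ hff, hinv _ hff]
        have hsplit : ∫ x, (f x - Tker κ f x) * f x ∂m
            = ∫ x, f x * f x ∂m - ∫ x, f x * Tker κ f x ∂m := by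
          rw [← integral_sub hff.integrable (hf.mul hf.Tker).integrable]
          congr 1; ext x; ring
        rw [hsplit]; ring

end Kernel

theorem lemma8_tfae_general
    (κ : Kernel X X) [IsFiniteKernel κ]
    (m : Measure X) [IsProbabilityMeasure m]
    (hcon : IsConservativeMeas κ m) (hrev : IsReversibleMeas κ m)
    (f : X → ℝ) (hf : BddMeasurable f) :
    [ (∀ g : X → ℝ, BddMeasurable g →
        ∀ᵐ x ∂m, Tker κ (fun y => g y * f y) x = Tker κ g x * f x),
      (∀ᵐ x ∂m, Tker κ f x = f x),
      (∫ x, (f x - Tker κ f x) * f x ∂m = 0),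
      (∀ᵐ p : X × X ∂(m.compProd κ), f p.1 = f p.2) ].TFAE := by
  tfae_have 1 → 2 := fun h => by
    filter_upwards [h _ (bddMeasurable_const 1), hcon.ae_kernel_univ_eq_one] with x hx h1
    simpa only [one_mul, Tker_one, h1] using hx
  tfae_have 2 → 3 := fun h => integral_eq_zero_of_ae <| by
    filter_upwards [h] with x hx
    simp [hx]
  tfae_have 3 → 4 := fun h =>
    (hf.comp_measurable measurable_fst).ae_eq_of_integral_sub_sq_eq_zero
      (hf.comp_measurable measurable_snd) <| by
        rw [integral_compProd_sub_sq hcon (hrev.isInvariantMeas hcon) hf, h, mul_zero]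
  tfae_have 4 → 1 := fun h g _ => by
    filter_upwards [Measure.ae_ae_of_ae_compProd h] with x hx
    have hfx : ∫ y, g y * f y ∂(κ x) = ∫ y, g y * f x ∂(κ x) :=
      integral_congr_ae (by filter_upwards [hx] with y hy; rw [hy])
    simp only [Tker, hfx, integral_mul_const]
  tfae_finish

/-- Lemma 8: the four conditions (a), (b), (c), (d) are equivalent. -/
theorem lemma8_tfae
    (κ : Kernel X X) [IsFiniteKernel κ] (hκ : ∀ x, κ x Set.univ ≤ 1)
    (m : Measure X) [IsProbabilityMeasure m]
    (hcon : IsConservativeMeas κ m) (hrev : IsReversibleMeas κ m)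
    (f : X → ℝ) (hf : BddMeasurable f) :
    [ (∀ g : X → ℝ, BddMeasurable g →
        ∀ᵐ x ∂m, Tker κ (fun y => g y * f y) x = Tker κ g x * f x),
      (∀ᵐ x ∂m, Tker κ f x = f x),
      (∫ x, (f x - Tker κ f x) * f x ∂m = 0),
      (∀ᵐ p : X × X ∂(m.compProd κ), f p.1 = f p.2) ].TFAE :=
  lemma8_tfae_general κ m hcon hrev f hf
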